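/- Let d ≥ 1 and let φ : ℝ^d → ℝ^d be a bijective C² map whose inverse φ^{-1} is C¹, and let x, z, z^1, …, z^d ∈ ℝ^d. Then there exist vectors a, a^1, …, a^d ∈ ℝ^d, depending only on φ, x, z, z^1, …, z^d, such that for every C¹ vector field w : ℝ^d → ℝ^d one has ⟨z, (Dφ · w)(φ^{-1}(x))⟩ + Σ_{j=1}^d ⟨z^j, ∂_j( y ↦ (Dφ · w)(φ^{-1}(y)) )(x)⟩ = ⟨a, w(φ^{-1}(x))⟩ + Σ_{j=1}^d ⟨a^j, (∂_j w)(φ^{-1}(x))⟩, where (Dφ · w)(y) := Dφ(y) w(y) denotes the Jacobian matrix of φ at y applied to w(y) and ∂_j the partial derivative in the j-th coordinate direction. -/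

import Mathlib

/-!
The pairing at `x` depends only, and linearly, on the 1-jet `(w (ψ x), Dw (ψ x))`: by the
product and chain rules,
`∂ⱼ ((Dφ · w) ∘ ψ) x = D(Dφ ∘ ψ) x eⱼ (w (ψ x)) + Dφ (ψ x) (Dw (ψ x) (Dψ x eⱼ))`.
Every linear functional on 1-jets is a sum of zeroth- and first-order Diracs, because an
operator `A` on `ι → R` is a sum of rank-one operators built from its columns `A eⱼ`.
-/

section DualOfPi

variable {R ι : Type*} [Fintype ι] [DecidableEq ι]

theorem LinearMap.exists_dotProduct_eq [CommSemiring R] (ℓ : (ι → R) →ₗ[R] R) :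
    ∃ a : ι → R, ∀ v, ℓ v = a ⬝ᵥ v :=
  ⟨(dotProductEquiv R ι).symm ℓ, fun v => by
    conv_lhs => rw [← (dotProductEquiv R ι).apply_symm_apply ℓ]
    rfl⟩

variable [CommSemiring R] [TopologicalSpace R] [IsTopologicalSemiring R]

theorem ContinuousLinearMap.eq_sum_smulRight_apply_single (A : (ι → R) →L[R] (ι → R)) :
    A = ∑ j, (ContinuousLinearMap.proj j).smulRight (A (Pi.single j 1)) := by
  ext v : 1
  conv_lhs => rw [pi_eq_sum_univ' v]
  simp

theorem LinearMap.exists_eq_dotProduct_add_sum_dotProduct_apply_single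
    (ℓ : (ι → R) × ((ι → R) →L[R] (ι → R)) →ₗ[R] R) :
    ∃ (a : ι → R) (a' : ι → ι → R), ∀ v A,
      ℓ (v, A) = a ⬝ᵥ v + ∑ j, a' j ⬝ᵥ A (Pi.single j 1) := by
  obtain ⟨a, ha⟩ := (ℓ ∘ₗ LinearMap.inl R _ _).exists_dotProduct_eq
  choose a' ha' using fun j : ι => (ℓ ∘ₗ LinearMap.inr R _ _ ∘ₗ
    (ContinuousLinearMap.proj j).smulRightₗ).exists_dotProduct_eq
  refine ⟨a, a', fun v A => ?_⟩
  have hsplit : (v, A) =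
      (v, 0) + ∑ j, (0, (ContinuousLinearMap.proj j).smulRight (A (Pi.single j 1))) := by
    ext1
    · simp [Prod.fst_sum]
    · simpa [Prod.snd_sum] using A.eq_sum_smulRight_apply_single
  rw [hsplit, map_add, map_sum]
  simpa using congrArg₂ (· + ·) (ha v) (Finset.sum_congr rfl fun j _ => ha' j _)

end DualOfPi

theorem coadjoint_preserves_diracs_general {d : ℕ}
    (φ ψ : (Fin d → ℝ) → (Fin d → ℝ))
    (hφ : ContDiff ℝ 2 φ) (hψ : ContDiff ℝ 1 ψ)
    (x : Fin d → ℝ) (z : Fin d → ℝ) (z' : Fin d → (Fin d → ℝ)) :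
    ∃ (a : Fin d → ℝ) (a' : Fin d → (Fin d → ℝ)),
      ∀ w : (Fin d → ℝ) → (Fin d → ℝ), ContDiff ℝ 1 w →
        z ⬝ᵥ fderiv ℝ φ (ψ x) (w (ψ x))
          + ∑ j, z' j ⬝ᵥ fderiv ℝ (fun y => fderiv ℝ φ (ψ y) (w (ψ y))) x (Pi.single j 1)
        = a ⬝ᵥ w (ψ x)
          + ∑ j, a' j ⬝ᵥ fderiv ℝ w (ψ x) (Pi.single j 1) := by
  set A₀ := fderiv ℝ φ (ψ x)
  set DG := fderiv ℝ (fun y => fderiv ℝ φ (ψ y)) x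
  set Dψ := fderiv ℝ ψ x
  -- the pairing as a function of the 1-jet `J = (w (ψ x), Dw (ψ x))`
  let ℓ : (Fin d → ℝ) × ((Fin d → ℝ) →L[ℝ] (Fin d → ℝ)) →ₗ[ℝ] ℝ :=
    { toFun := fun J => z ⬝ᵥ A₀ J.1
        + ∑ j, z' j ⬝ᵥ (DG (Pi.single j 1) J.1 + A₀ (J.2 (Dψ (Pi.single j 1))))
      map_add' := fun J K => by simp [dotProduct_add, Finset.sum_add_distrib]; ring
      map_smul' := fun c J => by simp [mul_add, Finset.mul_sum] }
  obtain ⟨a, a', hℓ⟩ := ℓ.exists_eq_dotProduct_add_sum_dotProduct_apply_single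
  refine ⟨a, a', fun w hw => ?_⟩
  have hG : DifferentiableAt ℝ (fun y => fderiv ℝ φ (ψ y)) x :=
    ((hφ.fderiv_right le_rfl).comp hψ).differentiable one_ne_zero x
  have hw' : DifferentiableAt ℝ w (ψ x) := hw.differentiable one_ne_zero _
  have hψ' : DifferentiableAt ℝ ψ x := hψ.differentiable one_ne_zero x
  rw [← hℓ, fderiv_clm_apply (u := fun y => w (ψ y)) hG (hw'.comp x hψ'),
    fderiv_fun_comp x hw' hψ']
  simp [ℓ, A₀, DG, Dψ, add_comm]

/-- the coadjoint transport `w ↦ (Dφ · w) ∘ φ⁻¹` maps a sum of zeroth and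
first-order Diracs at `x` to a sum of zeroth and first-order Diracs at `φ⁻¹ x`: there
exist coefficients `a, a¹, …, a^d` (depending only on `φ, x, z, z¹, …, z^d`) such that
for every `C¹` vector field `w` the stated pairings agree. -/
theorem coadjoint_preserves_diracs {d : ℕ} (hd : 1 ≤ d)
    (φ ψ : (Fin d → ℝ) → (Fin d → ℝ))
    (hbij : Function.Bijective φ)
    (hli : Function.LeftInverse ψ φ) (hri : Function.RightInverse ψ φ)
    (hφ : ContDiff ℝ 2 φ) (hψ : ContDiff ℝ 1 ψ)
    (x : Fin d → ℝ) (z : Fin d → ℝ) (z' : Fin d → (Fin d → ℝ)) :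
    ∃ (a : Fin d → ℝ) (a' : Fin d → (Fin d → ℝ)),
      ∀ w : (Fin d → ℝ) → (Fin d → ℝ), ContDiff ℝ 1 w →
        z ⬝ᵥ fderiv ℝ φ (ψ x) (w (ψ x))
          + ∑ j, z' j ⬝ᵥ fderiv ℝ (fun y => fderiv ℝ φ (ψ y) (w (ψ y))) x (Pi.single j 1)
        = a ⬝ᵥ w (ψ x)
          + ∑ j, a' j ⬝ᵥ fderiv ℝ w (ψ x) (Pi.single j 1) :=
  coadjoint_preserves_diracs_general φ ψ hφ hψ x z z'
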